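/- arXiv:1810.05960 — 8 statements merged into one kernel-verified Lean document; each statement's English description precedes it below -/
import Mathlib

section
/- For every n ≥ 5 there exists an arc-coloring of the complete digraph of order n with color number exactly ⌊n²/4⌋ + 1 that contains no rainbow triangle. (Explicitly: with vertices v_1, …, v_n, color the arcs in R = {v_{2i−1}v_{2j} : 1 ≤ i ≤ ⌈n/2⌉, 1 ≤ j ≤ ⌊n/2⌋} with pairwise distinct colors and color all remaining arcs with a single new color.) -/
/-
Colour the arcs from even-indexed to odd-indexed vertices with pairwise distinct colours and all
other arcs with one common colour. Two even-to-odd arcs never follow each other, while any two arcs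
of a directed triangle do, so every directed triangle has at least two arcs of the common colour.
There are ⌈n/2⌉⌊n/2⌋ = ⌊n²/4⌋ even-to-odd arcs.
-/

/-- The number of distinct colors appearing on the arcs `A` under coloring `C`. -/
def colorNum {n : ℕ} (A : Finset (Fin n × Fin n)) (C : Fin n × Fin n → ℕ) : ℕ :=
  (A.image C).card

/-- `A` contains a rainbow (directed) triangle under coloring `C`. -/
def hasRainbowTriangle {n : ℕ} (A : Finset (Fin n × Fin n)) (C : Fin n × Fin n → ℕ) : Prop :=
  ∃ u v w : Fin n, (u, v) ∈ A ∧ (v, w) ∈ A ∧ (w, u) ∈ A ∧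
    C (u, v) ≠ C (v, w) ∧ C (v, w) ≠ C (w, u) ∧ C (w, u) ≠ C (u, v)

/-- The arc set of the complete digraph on `Fin n`. -/
def completeArcs (n : ℕ) : Finset (Fin n × Fin n) :=
  Finset.univ.filter (fun p => p.1 ≠ p.2)

open Finset

lemma not_hasRainbowTriangle_of_const_off {n : ℕ} (A : Finset (Fin n × Fin n))
    (C : Fin n × Fin n → ℕ) (R : Set (Fin n × Fin n)) (c : ℕ)
    (hR : ∀ u v w, (u, v) ∈ R → (v, w) ∉ R) (hC : ∀ p ∉ R, C p = c) :
    ¬ hasRainbowTriangle A C := by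
  rintro ⟨u, v, w, -, -, -, huv_vw, hvw_wu, hwu_uv⟩
  by_cases huv : (u, v) ∈ R
  · exact hvw_wu <| (hC _ (hR u v w huv)).trans (hC _ fun hwu => hR w u v hwu huv).symm
  by_cases hvw : (v, w) ∈ R
  · exact hwu_uv <| (hC _ (hR v w u hvw)).trans (hC _ huv).symm
  · exact huv_vw <| (hC _ huv).trans (hC _ hvw).symm

lemma colorNum_eq_card_add_one {n : ℕ} {A R : Finset (Fin n × Fin n)} {C : Fin n × Fin n → ℕ}
    {c : ℕ} (hRA : R ⊂ A) (hinj : Set.InjOn C R) (hR : ∀ p ∈ R, C p ≠ c)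
    (hC : ∀ p ∈ A, p ∉ R → C p = c) :
    colorNum A C = #R + 1 := by
  have hoff : (A \ R).image C = {c} := by
    obtain ⟨p, hp⟩ := sdiff_nonempty.2 hRA.not_subset
    refine eq_singleton_iff_unique_mem.2 ⟨mem_image.2 ⟨p, hp, ?_⟩, ?_⟩
    · exact hC p (mem_sdiff.1 hp).1 (mem_sdiff.1 hp).2
    · simp only [mem_image, mem_sdiff]
      rintro _ ⟨q, ⟨hqA, hqR⟩, rfl⟩
      exact hC q hqA hqR
  have hc : c ∉ R.image C := fun h =>
    let ⟨p, hp, hpc⟩ := mem_image.1 h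
    hR p hp hpc
  rw [colorNum, ← union_sdiff_of_subset hRA.subset, image_union, hoff, union_comm,
    ← insert_eq, card_insert_of_notMem hc, card_image_of_injOn hinj]

/-- The paper's arcs `v_{2i-1} v_{2j}`, with the vertices renumbered from `0`. -/
def evenOddArcs (n : ℕ) : Finset (Fin n × Fin n) :=
  univ.map ⟨fun ij : Fin ((n + 1) / 2) × Fin (n / 2) =>
      (⟨2 * ij.1, by have := ij.1.isLt; omega⟩, ⟨2 * ij.2 + 1, by have := ij.2.isLt; omega⟩),
    fun ij kl h => by
      simp only [Prod.mk.injEq, Fin.mk.injEq] at h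
      exact Prod.ext (Fin.ext (by omega)) (Fin.ext (by omega))⟩

lemma mem_evenOddArcs {n : ℕ} {p : Fin n × Fin n} :
    p ∈ evenOddArcs n ↔ Even (p.1 : ℕ) ∧ Odd (p.2 : ℕ) := by
  simp only [evenOddArcs, mem_map, mem_univ, true_and]
  constructor
  · rintro ⟨ij, rfl⟩
    exact ⟨even_two_mul _, odd_two_mul_add_one _⟩
  · rintro ⟨⟨a, ha⟩, ⟨b, hb⟩⟩
    have := p.1.isLt
    have := p.2.isLt
    exact ⟨(⟨a, by omega⟩, ⟨b, by omega⟩),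
      Prod.ext (Fin.ext (show 2 * a = _ by omega)) (Fin.ext (show 2 * b + 1 = _ by omega))⟩

lemma card_evenOddArcs (n : ℕ) : #(evenOddArcs n) = n ^ 2 / 4 := by
  rw [evenOddArcs, card_map, card_univ, Fintype.card_prod, Fintype.card_fin, Fintype.card_fin]
  rcases Nat.even_or_odd' n with ⟨k, rfl | rfl⟩
  · rw [show (2 * k + 1) / 2 = k by omega, show 2 * k / 2 = k by omega,
      show (2 * k) ^ 2 = 4 * (k * k) by ring]
    omega
  · rw [show (2 * k + 1 + 1) / 2 = k + 1 by omega, show (2 * k + 1) / 2 = k by omega,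
      show (2 * k + 1) ^ 2 = 4 * ((k + 1) * k) + 1 by ring]
    omega

lemma evenOddArcs_ssubset_completeArcs {n : ℕ} (hn : 2 ≤ n) : evenOddArcs n ⊂ completeArcs n := by
  refine Finset.ssubset_iff_subset_ne.2 ⟨fun p hp => ?_, fun h => ?_⟩
  · obtain ⟨hu, hv⟩ := mem_evenOddArcs.1 hp
    refine mem_filter.2 ⟨mem_univ _, fun huv => ?_⟩
    exact Nat.not_even_iff_odd.2 hv (huv ▸ hu)
  · have hmem : ((⟨1, hn⟩, ⟨0, by omega⟩) : Fin n × Fin n) ∈ completeArcs n := by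
      simp [completeArcs, Fin.ext_iff]
    rw [← h, mem_evenOddArcs] at hmem
    exact Nat.not_even_one hmem.1

lemma evenOddArcs_not_consecutive {n : ℕ} {u v w : Fin n} (huv : (u, v) ∈ evenOddArcs n) :
    (v, w) ∉ evenOddArcs n := fun hvw =>
  Nat.not_even_iff_odd.2 (mem_evenOddArcs.1 huv).2 (mem_evenOddArcs.1 hvw).1

/-- For every `n ≥ 5` there is an arc-coloring of the complete digraph of
order `n` with color number exactly `⌊n²/4⌋ + 1` and no rainbow triangle. -/
theorem stmt_1 (n : ℕ) (hn : 5 ≤ n) :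
    ∃ C : Fin n × Fin n → ℕ,
      colorNum (completeArcs n) C = n ^ 2 / 4 + 1 ∧
      ¬ hasRainbowTriangle (completeArcs n) C := by
  let C : Fin n × Fin n → ℕ := fun p => if p ∈ evenOddArcs n then finProdFinEquiv p + 1 else 0
  have hinj : Set.InjOn C (evenOddArcs n) := fun p hp q hq hpq => by
    simp only [C, if_pos (mem_coe.1 hp), if_pos (mem_coe.1 hq)] at hpq
    exact finProdFinEquiv.injective (Fin.ext (by omega))
  refine ⟨C, ?_, ?_⟩
  · rw [colorNum_eq_card_add_one (c := 0) (evenOddArcs_ssubset_completeArcs (by omega)) hinj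
      (fun p hp => by simp [C, hp]) (fun p _ hp => if_neg hp), card_evenOddArcs]
  · exact not_hasRainbowTriangle_of_const_off _ C (evenOddArcs n) 0
      (fun _ _ _ => evenOddArcs_not_consecutive) (fun p hp => if_neg hp)
end

section
/- Let D be an arc-colored complete digraph of order 4 with color number c(D) ≥ 7. Then D contains a rainbow triangle. -/
open Finset

section Blocks

variable {α : Type*} [DecidableEq α] (𝓑 : Finset (Finset α))

def heavyBlocks (S : Finset α) : Finset (Finset α) :=
  {B ∈ 𝓑 | 2 ≤ #(B ∩ S)}

variable {𝓑}

lemma card_heavyBlocks_le (hdeg : ∀ a, #{B ∈ 𝓑 | a ∈ B} ≤ 2) (S : Finset α) :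
    #(heavyBlocks 𝓑 S) ≤ #S := by
  have : 2 * #(heavyBlocks 𝓑 S) ≤ 2 * #S :=
    calc 2 * #(heavyBlocks 𝓑 S) = ∑ _ ∈ heavyBlocks 𝓑 S, 2 := by
          rw [sum_const, smul_eq_mul, mul_comm]
      _ ≤ ∑ B ∈ heavyBlocks 𝓑 S, #(S ∩ B) :=
        sum_le_sum fun B hB => by rw [inter_comm]; exact (mem_filter.1 hB).2
      _ ≤ ∑ B ∈ 𝓑, #(S ∩ B) := sum_le_sum_of_subset (filter_subset _ _)
      _ ≤ #S * 2 := sum_card_inter_le fun a _ => hdeg a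
      _ = 2 * #S := mul_comm _ _
  omega

lemma two_le_card_of_mem_heavyBlocks {S B : Finset α} (hB : B ∈ heavyBlocks 𝓑 S) : 2 ≤ #S :=
  (mem_filter.1 hB).2.trans (card_le_card inter_subset_right)

lemma card_heavyBlocks_le_one (hcodeg : ∀ a b, a ≠ b → #{B ∈ 𝓑 | a ∈ B ∧ b ∈ B} ≤ 1)
    {S : Finset α} (hS : #S ≤ 2) : #(heavyBlocks 𝓑 S) ≤ 1 := by
  obtain hempty | ⟨B₀, hB₀⟩ := (heavyBlocks 𝓑 S).eq_empty_or_nonempty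
  · simp [hempty]
  have hS_sub : ∀ B ∈ heavyBlocks 𝓑 S, S ⊆ B := by
    intro B hB
    have hBS : B ∩ S = S :=
      eq_of_subset_of_card_le inter_subset_right (hS.trans (mem_filter.1 hB).2)
    exact hBS ▸ inter_subset_left
  obtain ⟨a, ha, b, hb, hab⟩ := one_lt_card.1 (mem_filter.1 hB₀).2
  refine (card_le_card fun B hB => ?_).trans (hcodeg a b hab)
  exact mem_filter.2 ⟨(mem_filter.1 hB).1, hS_sub B hB (mem_inter.1 ha).2,
    hS_sub B hB (mem_inter.1 hb).2⟩

lemma two_mul_card_heavyBlocks_add_three_le (hdeg : ∀ a, #{B ∈ 𝓑 | a ∈ B} ≤ 2)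
    (hcodeg : ∀ a b, a ≠ b → #{B ∈ 𝓑 | a ∈ B ∧ b ∈ B} ≤ 1) {S : Finset α}
    (hS : S.Nonempty) : 2 * #(heavyBlocks 𝓑 S) + 3 ≤ 3 * #S := by
  have hpos := hS.card_pos
  obtain hempty | ⟨B, hB⟩ := (heavyBlocks 𝓑 S).eq_empty_or_nonempty
  · simp only [hempty, card_empty]
    omega
  have h2 := two_le_card_of_mem_heavyBlocks hB
  by_cases hS2 : #S ≤ 2
  · have := card_heavyBlocks_le_one hcodeg hS2
    omega
  · have := card_heavyBlocks_le hdeg S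
    omega

theorem two_mul_card_add_three_mul_card_image_le {β : Type*} [DecidableEq β] (f : α → β)
    (A : Finset α) (hdeg : ∀ a, #{B ∈ 𝓑 | a ∈ B} ≤ 2)
    (hcodeg : ∀ a b, a ≠ b → #{B ∈ 𝓑 | a ∈ B ∧ b ∈ B} ≤ 1) (hsub : ∀ B ∈ 𝓑, B ⊆ A)
    (hrep : ∀ B ∈ 𝓑, ∃ a ∈ B, ∃ b ∈ B, a ≠ b ∧ f a = f b) :
    2 * #𝓑 + 3 * #(A.image f) ≤ 3 * #A := by
  set fiber : β → Finset α := fun x => {a ∈ A | f a = x}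
  have hcover : 𝓑 ⊆ (A.image f).biUnion fun x => heavyBlocks 𝓑 (fiber x) := by
    intro B hB
    obtain ⟨a, ha, b, hb, hab, hfab⟩ := hrep B hB
    have hpair : {a, b} ⊆ B ∩ fiber (f a) := by
      simp only [insert_subset_iff, singleton_subset_iff, mem_inter, mem_filter, fiber]
      exact ⟨⟨ha, hsub B hB ha, trivial⟩, hb, hsub B hB hb, hfab.symm⟩
    refine mem_biUnion.2 ⟨f a, mem_image_of_mem f (hsub B hB ha), mem_filter.2 ⟨hB, ?_⟩⟩
    exact (card_pair hab).symm.le.trans (card_le_card hpair)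
  have hfiber : ∀ x ∈ A.image f, 2 * #(heavyBlocks 𝓑 (fiber x)) + 3 ≤ 3 * #(fiber x) := by
    intro x hx
    obtain ⟨a, ha, rfl⟩ := mem_image.1 hx
    exact two_mul_card_heavyBlocks_add_three_le hdeg hcodeg ⟨a, mem_filter.2 ⟨ha, rfl⟩⟩
  calc 2 * #𝓑 + 3 * #(A.image f)
      ≤ 2 * ∑ x ∈ A.image f, #(heavyBlocks 𝓑 (fiber x)) + ∑ x ∈ A.image f, 3 := by
        rw [sum_const, smul_eq_mul, mul_comm (#(A.image f))]
        gcongr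
        exact (card_le_card hcover).trans card_biUnion_le
    _ = ∑ x ∈ A.image f, (2 * #(heavyBlocks 𝓑 (fiber x)) + 3) := by
        rw [mul_sum, sum_add_distrib]
    _ ≤ ∑ x ∈ A.image f, 3 * #(fiber x) := sum_le_sum hfiber
    _ = 3 * #A := by rw [← mul_sum, ← card_eq_sum_card_image]

end Blocks

def directedTriangles (n : ℕ) : Finset (Finset (Fin n × Fin n)) :=
  ({t : Fin n × Fin n × Fin n | t.1 ≠ t.2.1 ∧ t.2.1 ≠ t.2.2 ∧ t.2.2 ≠ t.1} : Finset _).image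
    fun t => {(t.1, t.2.1), (t.2.1, t.2.2), (t.2.2, t.1)}

lemma subset_completeArcs_of_mem_directedTriangles {n : ℕ} {B : Finset (Fin n × Fin n)}
    (hB : B ∈ directedTriangles n) : B ⊆ completeArcs n := by
  obtain ⟨⟨u, v, w⟩, huvw, rfl⟩ := mem_image.1 hB
  simp only [mem_filter, mem_univ, true_and] at huvw
  simp [insert_subset_iff, completeArcs, huvw]

lemma exists_color_eq_of_not_hasRainbowTriangle {n : ℕ} {C : Fin n × Fin n → ℕ}
    (h : ¬ hasRainbowTriangle (completeArcs n) C) :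
    ∀ B ∈ directedTriangles n, ∃ a ∈ B, ∃ b ∈ B, a ≠ b ∧ C a = C b := by
  intro B hB
  have hsub := subset_completeArcs_of_mem_directedTriangles hB
  obtain ⟨⟨u, v, w⟩, huvw, rfl⟩ := mem_image.1 hB
  simp only [mem_filter, mem_univ, true_and] at huvw
  obtain ⟨huv, hvw, hwu⟩ := huvw
  simp only [insert_subset_iff, singleton_subset_iff] at hsub
  obtain ⟨h₁, h₂, h₃⟩ := hsub
  simp only [hasRainbowTriangle, not_exists, not_and, not_not] at h
  have hnot := h u v w h₁ h₂ h₃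
  by_cases e₁ : C (u, v) = C (v, w)
  · exact ⟨(u, v), by simp, (v, w), by simp, by simp [huv], e₁⟩
  by_cases e₂ : C (v, w) = C (w, u)
  · exact ⟨(v, w), by simp, (w, u), by simp, by simp [hvw], e₂⟩
  exact ⟨(w, u), by simp, (u, v), by simp, by simp [hwu], hnot e₁ e₂⟩

lemma card_directedTriangles_four : #(directedTriangles 4) = 8 := by decide

lemma card_directedTriangles_four_mem_le (a : Fin 4 × Fin 4) :
    #{B ∈ directedTriangles 4 | a ∈ B} ≤ 2 := by
  revert a
  decide

lemma card_directedTriangles_four_mem_mem_le (a b : Fin 4 × Fin 4) (hab : a ≠ b) :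
    #{B ∈ directedTriangles 4 | a ∈ B ∧ b ∈ B} ≤ 1 := by
  revert a b
  decide

lemma card_completeArcs_four : #(completeArcs 4) = 12 := by decide

/-- Every arc-colored complete digraph of order 4 with color number at least 7
contains a rainbow triangle. -/
theorem stmt_4 (C : Fin 4 × Fin 4 → ℕ)
    (hc : 7 ≤ colorNum (completeArcs 4) C) :
    hasRainbowTriangle (completeArcs 4) C := by
  by_contra h
  have := two_mul_card_add_three_mul_card_image_le C (completeArcs 4)
    card_directedTriangles_four_mem_le card_directedTriangles_four_mem_mem_le
    (fun _ => subset_completeArcs_of_mem_directedTriangles)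
    (exists_color_eq_of_not_hasRainbowTriangle h)
  rw [card_directedTriangles_four, card_completeArcs_four] at this
  unfold colorNum at hc
  omega
end

section
/- Let n ≥ 3 and let D be an arc-colored strongly connected tournament on n vertices. If c(D) ≥ n(n−1)/2 − n + 3, then D contains a rainbow triangle. -/
/-!
Every vertex `v` of a strong tournament lies on a directed triangle `v → a → b → v`. If that
triangle is not rainbow, one of the `N - 1` arcs at `v` repeats a colour occurring on another arc at
`v` or inside `D - v`, so deleting `v` loses at most `N - 2` colours. Growing strong subtournaments
one vertex at a time from a triangle, as in Moon's proof of pancyclicity, shows that a strong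
tournament on `N ≥ 4` vertices has a vertex whose deletion leaves it strong. Deleting such vertices
down to a triangle, which carries at most `2` colours, gives `c(D) ≤ N(N-1)/2 - N + 2`.
-/

theorem Relation.ReflTransGen.exists_rel_pred_not_pred {α : Type*} {r : α → α → Prop}
    {P : α → Prop} {x y : α} (h : Relation.ReflTransGen r x y) (hx : P x) (hy : ¬ P y) :
    ∃ u w, r u w ∧ P u ∧ ¬ P w := by
  induction h with
  | refl => exact absurd hx hy
  | @tail b c _ hbc ih =>
    by_cases hb : P b
    · exact ⟨b, c, hbc, hb, hy⟩
    · exact ih hb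

theorem Finset.card_union_image_lt_of_mem {α β : Type*} [DecidableEq α] [DecidableEq β]
    {X : Finset α} {s : Finset β} {g : β → α} {a : β} (ha : a ∈ s)
    (h : g a ∈ X ∪ (s.erase a).image g) : (X ∪ s.image g).card < X.card + s.card := by
  have hs : s.image g = insert (g a) ((s.erase a).image g) := by
    rw [← Finset.image_insert, Finset.insert_erase ha]
  rw [hs, Finset.union_insert, Finset.insert_eq_of_mem h]
  calc (X ∪ (s.erase a).image g).card ≤ X.card + ((s.erase a).image g).card :=
        Finset.card_union_le _ _
    _ ≤ X.card + (s.erase a).card := by gcongr; exact Finset.card_image_le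
    _ < X.card + s.card := Nat.add_lt_add_left (Finset.card_erase_lt_of_mem ha) _

namespace Tournament

variable {V : Type*} {A : Finset (V × V)} {S T : Finset V} {u v w x y : V}

structure IsTournament (A : Finset (V × V)) : Prop where
  irrefl : ∀ v, (v, v) ∉ A
  mem_iff_not_mem_swap : ∀ u v, u ≠ v → ((u, v) ∈ A ↔ (v, u) ∉ A)

namespace IsTournament

theorem ne_of_mem (hA : IsTournament A) (h : (u, v) ∈ A) : u ≠ v := by
  rintro rfl
  exact hA.irrefl u h

theorem not_mem_swap (hA : IsTournament A) (h : (u, v) ∈ A) : (v, u) ∉ A :=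
  (hA.mem_iff_not_mem_swap u v (hA.ne_of_mem h)).1 h

theorem mem_swap_of_not_mem (hA : IsTournament A) (huv : u ≠ v) (h : (u, v) ∉ A) :
    (v, u) ∈ A :=
  (hA.mem_iff_not_mem_swap v u huv.symm).2 h

end IsTournament

variable [DecidableEq V]

def arcsOn (A : Finset (V × V)) (S : Finset V) : Finset (V × V) :=
  A.filter fun p => p.1 ∈ S ∧ p.2 ∈ S

theorem mem_arcsOn : (u, v) ∈ arcsOn A S ↔ (u, v) ∈ A ∧ u ∈ S ∧ v ∈ S :=
  Finset.mem_filter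

theorem arcsOn_mono (h : S ⊆ T) : arcsOn A S ⊆ arcsOn A T :=
  Finset.monotone_filter_right _ fun _ _ hp => ⟨h hp.1, h hp.2⟩

def IsStrongOn (A : Finset (V × V)) (S : Finset V) : Prop :=
  ∀ x ∈ S, ∀ y ∈ S, Relation.ReflTransGen (fun u w => (u, w) ∈ arcsOn A S) x y

theorem IsStrongOn.reflTransGen_of_subset (hT : IsStrongOn A T) (hTS : T ⊆ S) (hx : x ∈ T)
    (hy : y ∈ T) :
    Relation.ReflTransGen (fun u w => (u, w) ∈ arcsOn A S) x y :=
  Relation.ReflTransGen.mono (fun _ _ h => arcsOn_mono hTS h) _ _ (hT x hx y hy)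

theorem isStrongOn_of_hub {c : V}
    (h : ∀ z ∈ S, Relation.ReflTransGen (fun u w => (u, w) ∈ arcsOn A S) z c ∧
      Relation.ReflTransGen (fun u w => (u, w) ∈ arcsOn A S) c z) :
    IsStrongOn A S :=
  fun x hx y hy => (h x hx).1.trans (h y hy).2

theorem IsStrongOn.exists_triangle (hA : IsTournament A) (hS : IsStrongOn A S) (hv : v ∈ S)
    (hx : x ∈ S) (hxv : x ≠ v) :
    ∃ a ∈ S, ∃ b ∈ S, (v, a) ∈ A ∧ (a, b) ∈ A ∧ (b, v) ∈ A := by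
  obtain ⟨u, w, huw, hu : u = v, -⟩ :=
    (hS v hv x hx).exists_rel_pred_not_pred (P := (· = v)) rfl hxv
  obtain ⟨hvw, -, hw⟩ := mem_arcsOn.1 (hu ▸ huw)
  obtain ⟨a, b, hab, hva, hvb⟩ :=
    (hS w hw v hv).exists_rel_pred_not_pred (P := fun z => (v, z) ∈ A) hvw (hA.irrefl v)
  obtain ⟨hab, ha, hb⟩ := mem_arcsOn.1 hab
  have hbv : b ≠ v := by
    rintro rfl
    exact hA.not_mem_swap hva hab
  exact ⟨a, ha, b, hb, hva, hab, hA.mem_swap_of_not_mem hbv.symm hvb⟩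

theorem IsStrongOn.insert_of_arcs (hT : IsStrongOn A T) (hu : u ∈ T) (hux : (u, x) ∈ A)
    (hw : w ∈ T) (hxw : (x, w) ∈ A) : IsStrongOn A (insert x T) := by
  have hsub : T ⊆ insert x T := Finset.subset_insert x T
  refine isStrongOn_of_hub (c := x) fun z hz => ?_
  rcases Finset.mem_insert.1 hz with rfl | hz
  · exact ⟨.refl, .refl⟩
  · have hux : (u, x) ∈ arcsOn A (insert x T) := mem_arcsOn.2 ⟨hux, hsub hu, T.mem_insert_self x⟩
    have hxw : (x, w) ∈ arcsOn A (insert x T) := mem_arcsOn.2 ⟨hxw, T.mem_insert_self x, hsub hw⟩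
    exact ⟨(hT.reflTransGen_of_subset hsub hz hu).tail hux,
      .head hxw (hT.reflTransGen_of_subset hsub hw hz)⟩

theorem isStrongOn_insert_insert (hxy : (x, y) ∈ A) (hx_in : ∀ z ∈ T, (z, x) ∈ A)
    (hy_out : ∀ z ∈ T, (y, z) ∈ A) (hT : T.Nonempty) : IsStrongOn A (insert x (insert y T)) := by
  obtain ⟨t, ht⟩ := hT
  set S := insert x (insert y T)
  have hxS : x ∈ S := by simp [S]
  have hyS : y ∈ S := by simp [S]
  have hTS : ∀ z ∈ T, z ∈ S := fun z hz => by simp [S, hz]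
  have hxy : (x, y) ∈ arcsOn A S := mem_arcsOn.2 ⟨hxy, hxS, hyS⟩
  have hzx (z) (hz : z ∈ T) : (z, x) ∈ arcsOn A S := mem_arcsOn.2 ⟨hx_in z hz, hTS z hz, hxS⟩
  have hyz (z) (hz : z ∈ T) : (y, z) ∈ arcsOn A S := mem_arcsOn.2 ⟨hy_out z hz, hyS, hTS z hz⟩
  refine isStrongOn_of_hub (c := x) fun z hz => ?_
  rcases Finset.mem_insert.1 hz with rfl | hz
  · exact ⟨.refl, .refl⟩
  rcases Finset.mem_insert.1 hz with rfl | hz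
  · exact ⟨(Relation.ReflTransGen.single (hyz t ht)).tail (hzx t ht), .single hxy⟩
  · exact ⟨.single (hzx z hz), (Relation.ReflTransGen.single hxy).tail (hyz z hz)⟩

theorem IsStrongOn.exists_arc_dominated_dominating (hA : IsTournament A) (hS : IsStrongOn A S)
    (hTS : T ⊆ S) {s t : V} (hs : s ∈ S) (hsT : s ∉ T) (ht : t ∈ T)
    (hins : ∀ x ∈ S, x ∉ T → (∃ u ∈ T, (u, x) ∈ A) → ∀ w ∈ T, (x, w) ∉ A) :
    ∃ x ∈ S, ∃ y ∈ S, x ∉ T ∧ y ∉ T ∧ (x, y) ∈ A ∧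
      (∀ z ∈ T, (z, x) ∈ A) ∧ ∀ z ∈ T, (y, z) ∈ A := by
  obtain ⟨y₀, t₀, hyt₀, hy₀, ht₀⟩ :=
    (hS s hs t (hTS ht)).exists_rel_pred_not_pred (P := (· ∉ T)) hsT (not_not.2 ht)
  obtain ⟨hyt₀, hy₀S, -⟩ := mem_arcsOn.1 hyt₀
  obtain ⟨x, y, hxy, hx, hy⟩ := (hS t (hTS ht) y₀ hy₀S).exists_rel_pred_not_pred
    (P := fun z => z ∈ T ∨ ∀ w ∈ T, (z, w) ∉ A) (Or.inl ht)
    (by push Not; exact ⟨hy₀, t₀, not_not.1 ht₀, hyt₀⟩)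
  push Not at hy
  obtain ⟨hyT, w, hw, hyw⟩ := hy
  obtain ⟨hxy, hxS, hyS⟩ := mem_arcsOn.1 hxy
  have hin : ∀ u ∈ T, (u, y) ∉ A := fun u hu huy => hins y hyS hyT ⟨u, hu, huy⟩ w hw hyw
  have hxT : x ∉ T := fun h => hin x h hxy
  have hout : ∀ w ∈ T, (x, w) ∉ A := hx.resolve_left hxT
  refine ⟨x, hxS, y, hyS, hxT, hyT, hxy, fun z hz => ?_, fun z hz => ?_⟩
  · exact hA.mem_swap_of_not_mem (fun h => hxT (h ▸ hz)) (hout z hz)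
  · exact hA.mem_swap_of_not_mem (fun h => hyT (h ▸ hz)) (hin z hz)

/-- Either an outside vertex has an in- and an out-neighbour in `T` and can be added to `T`, or
every outside vertex dominates `T` or is dominated by it; then an arc `x → y` from a dominated to a
dominating vertex lets `x, y` replace any vertex of `T`. -/
theorem IsStrongOn.exists_card_eq_add_one (hA : IsTournament A) (hS : IsStrongOn A S)
    (hTS : T ⊆ S) (hT : IsStrongOn A T) (hT2 : 2 ≤ T.card) (hlt : T.card < S.card) :
    ∃ T' ⊆ S, IsStrongOn A T' ∧ T'.card = T.card + 1 := by
  by_cases hins : ∃ x ∈ S, x ∉ T ∧ (∃ u ∈ T, (u, x) ∈ A) ∧ ∃ w ∈ T, (x, w) ∈ A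
  · obtain ⟨x, hxS, hxT, ⟨u, hu, hux⟩, w, hw, hxw⟩ := hins
    exact ⟨insert x T, Finset.insert_subset hxS hTS, hT.insert_of_arcs hu hux hw hxw,
      Finset.card_insert_of_notMem hxT⟩
  push Not at hins
  obtain ⟨s, hs, hsT⟩ := Finset.exists_mem_notMem_of_card_lt_card hlt
  obtain ⟨b, hb⟩ : T.Nonempty := Finset.card_pos.1 (by omega)
  obtain ⟨x, hxS, y, hyS, hxT, hyT, hxy, hx_in, hy_out⟩ :=
    hS.exists_arc_dominated_dominating hA hTS hs hsT hb hins
  have hne : (T.erase b).Nonempty := by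
    rw [← Finset.card_pos, Finset.card_erase_of_mem hb]
    omega
  refine ⟨insert x (insert y (T.erase b)), ?_, ?_, ?_⟩
  · exact Finset.insert_subset hxS (Finset.insert_subset hyS ((T.erase_subset b).trans hTS))
  · exact isStrongOn_insert_insert hxy (fun z hz => hx_in z (Finset.mem_of_mem_erase hz))
      (fun z hz => hy_out z (Finset.mem_of_mem_erase hz)) hne
  · have hy : y ∉ T.erase b := fun h => hyT (Finset.mem_of_mem_erase h)
    have hx : x ∉ insert y (T.erase b) := by
      simp only [Finset.mem_insert, not_or]
      exact ⟨hA.ne_of_mem hxy, fun h => hxT (Finset.mem_of_mem_erase h)⟩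
    rw [Finset.card_insert_of_notMem hx, Finset.card_insert_of_notMem hy,
      Finset.card_erase_of_mem hb]
    omega

theorem IsStrongOn.exists_subset_card_eq (hA : IsTournament A) (hS : IsStrongOn A S) {k : ℕ}
    (h3 : 3 ≤ k) (hk : k ≤ S.card) : ∃ T ⊆ S, IsStrongOn A T ∧ T.card = k := by
  induction k, h3 using Nat.le_induction with
  | base =>
    obtain ⟨v, hv⟩ : S.Nonempty := Finset.card_pos.1 (by omega)
    obtain ⟨x, hx, hxv⟩ := Finset.exists_mem_ne (s := S) (by omega) v
    obtain ⟨a, ha, b, hb, hva, hab, hbv⟩ := hS.exists_triangle hA hv hx hxv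
    refine ⟨{a, b, v}, ?_, isStrongOn_insert_insert hab (by simpa) (by simpa) ⟨v, by simp⟩, ?_⟩
    · simp [Finset.insert_subset_iff, ha, hb, hv]
    · exact Finset.card_eq_three.2 ⟨a, b, v, hA.ne_of_mem hab, (hA.ne_of_mem hva).symm,
        hA.ne_of_mem hbv, rfl⟩
  | succ k h3 ih =>
    obtain ⟨T, hTS, hT, rfl⟩ := ih (by omega)
    exact hS.exists_card_eq_add_one hA hTS hT (by omega) (by omega)

theorem IsStrongOn.exists_isStrongOn_erase (hA : IsTournament A) (hS : IsStrongOn A S)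
    (h4 : 4 ≤ S.card) : ∃ v ∈ S, IsStrongOn A (S.erase v) := by
  obtain ⟨T, hTS, hT, hcard⟩ := hS.exists_subset_card_eq hA (k := S.card - 1) (by omega) (by omega)
  obtain ⟨v, hv, hvT⟩ := Finset.exists_mem_notMem_of_card_lt_card (by omega : T.card < S.card)
  have hTv : T = S.erase v := by
    refine Finset.eq_of_subset_of_card_le (fun z hz => ?_) ?_
    · exact Finset.mem_erase.2 ⟨fun h => hvT (h ▸ hz), hTS hz⟩
    · rw [Finset.card_erase_of_mem hv]
      omega
  exact ⟨v, hv, hTv ▸ hT⟩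

def arcBetween (A : Finset (V × V)) (v u : V) : V × V :=
  if (v, u) ∈ A then (v, u) else (u, v)

theorem arcsOn_subset_arcsOn_erase_union_image (hA : IsTournament A) (S : Finset V) (v : V) :
    arcsOn A S ⊆ arcsOn A (S.erase v) ∪ (S.erase v).image (arcBetween A v) := by
  rintro ⟨x, y⟩ h
  obtain ⟨hxy, hx, hy⟩ := mem_arcsOn.1 h
  rw [Finset.mem_union, Finset.mem_image, mem_arcsOn]
  by_cases hxv : x = v
  · subst hxv
    exact .inr ⟨y, Finset.mem_erase.2 ⟨(hA.ne_of_mem hxy).symm, hy⟩, if_pos hxy⟩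
  by_cases hyv : y = v
  · subst hyv
    exact .inr ⟨x, Finset.mem_erase.2 ⟨hxv, hx⟩, if_neg (hA.not_mem_swap hxy)⟩
  · exact .inl ⟨hxy, Finset.mem_erase.2 ⟨hxv, hx⟩, Finset.mem_erase.2 ⟨hyv, hy⟩⟩

theorem card_arcsOn_le_choose_two (hA : IsTournament A) (S : Finset V) :
    (arcsOn A S).card ≤ S.card.choose 2 := by
  induction S using Finset.induction_on with
  | empty => simp [arcsOn]
  | insert v S hv ih =>
    have h := Finset.card_le_card (arcsOn_subset_arcsOn_erase_union_image hA (insert v S) v)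
    rw [Finset.erase_insert hv] at h
    have := Finset.card_union_le (arcsOn A S) (S.image (arcBetween A v))
    have := Finset.card_image_le (s := S) (f := arcBetween A v)
    have hch : (S.card + 1).choose 2 = S.card.choose 2 + S.card := by
      rw [Nat.choose_succ_succ', Nat.choose_one_right, add_comm]
    rw [Finset.card_insert_of_notMem hv, hch]
    omega

def NoRainbowTriangle (A : Finset (V × V)) (C : V × V → ℕ) : Prop :=
  ∀ u v w, (u, v) ∈ A → (v, w) ∈ A → (w, u) ∈ A →
    C (u, v) = C (v, w) ∨ C (v, w) = C (w, u) ∨ C (w, u) = C (u, v)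

theorem IsStrongOn.card_image_arcsOn_add_two_le {C : V × V → ℕ} (hA : IsTournament A)
    (hC : NoRainbowTriangle A C) (hS : IsStrongOn A S) (hv : v ∈ S) (hx : x ∈ S) (hxv : x ≠ v) :
    ((arcsOn A S).image C).card + 2 ≤ ((arcsOn A (S.erase v)).image C).card + S.card := by
  obtain ⟨a, ha, b, hb, hva, hab, hbv⟩ := hS.exists_triangle hA hv hx hxv
  set X := (arcsOn A (S.erase v)).image C
  set g : V → ℕ := fun u => C (arcBetween A v u)
  have ha' : a ∈ S.erase v := Finset.mem_erase.2 ⟨(hA.ne_of_mem hva).symm, ha⟩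
  have hb' : b ∈ S.erase v := Finset.mem_erase.2 ⟨hA.ne_of_mem hbv, hb⟩
  have hga : g a = C (v, a) := congrArg C (if_pos hva)
  have hgb : g b = C (b, v) := congrArg C (if_neg (hA.not_mem_swap hbv))
  have hCab : C (a, b) ∈ X := Finset.mem_image_of_mem C (mem_arcsOn.2 ⟨hab, ha', hb'⟩)
  have hsub : (arcsOn A S).image C ⊆ X ∪ (S.erase v).image g := by
    refine (Finset.image_subset_image (arcsOn_subset_arcsOn_erase_union_image hA S v)).trans ?_
    rw [Finset.image_union, Finset.image_image]
    rfl
  have hlt : (X ∪ (S.erase v).image g).card < X.card + (S.erase v).card := by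
    rcases hC v a b hva hab hbv with h | h | h
    · exact Finset.card_union_image_lt_of_mem ha' (Finset.mem_union_left _ (by rwa [hga, h]))
    · exact Finset.card_union_image_lt_of_mem hb' (Finset.mem_union_left _ (by rwa [hgb, ← h]))
    · refine Finset.card_union_image_lt_of_mem ha' (Finset.mem_union_right _ ?_)
      refine Finset.mem_image.2 ⟨b, Finset.mem_erase.2 ⟨(hA.ne_of_mem hab).symm, hb'⟩, ?_⟩
      rw [hga, hgb, h]
  have := Finset.card_le_card hsub
  have := Finset.card_pos.2 ⟨v, hv⟩
  rw [Finset.card_erase_of_mem hv] at hlt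
  omega

theorem IsStrongOn.card_image_arcsOn_add_card_le {C : V × V → ℕ} (hA : IsTournament A)
    (hC : NoRainbowTriangle A C) (hS : IsStrongOn A S) (h3 : 3 ≤ S.card) :
    ((arcsOn A S).image C).card + S.card ≤ S.card.choose 2 + 2 := by
  generalize hn : S.card = n at h3
  induction n, h3 using Nat.le_induction generalizing S with
  | base =>
    obtain ⟨v, hv⟩ : S.Nonempty := Finset.card_pos.1 (by omega)
    obtain ⟨x, hx, hxv⟩ := Finset.exists_mem_ne (s := S) (by omega) v
    have hstep := hS.card_image_arcsOn_add_two_le hA hC hv hx hxv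
    have hrest : ((arcsOn A (S.erase v)).image C).card ≤ 1 := by
      refine Finset.card_image_le.trans ((card_arcsOn_le_choose_two hA _).trans ?_)
      rw [Finset.card_erase_of_mem hv, hn]
      rfl
    have : (3 : ℕ).choose 2 = 3 := rfl
    omega
  | succ n h3 ih =>
    obtain ⟨v, hv, hS'⟩ := hS.exists_isStrongOn_erase hA (by omega)
    obtain ⟨x, hx, hxv⟩ := Finset.exists_mem_ne (s := S) (by omega) v
    have hstep := hS.card_image_arcsOn_add_two_le hA hC hv hx hxv
    have hrest := ih hS' (by rw [Finset.card_erase_of_mem hv, hn]; rfl)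
    have hch : (n + 1).choose 2 = n.choose 2 + n := by
      rw [Nat.choose_succ_succ', Nat.choose_one_right, add_comm]
    omega

end Tournament

/-- An arc-colored strongly connected tournament on `n ≥ 3` vertices with
`c(D) ≥ n(n-1)/2 - n + 3` contains a rainbow triangle. -/
theorem stmt_12 (n : ℕ) (hn : 3 ≤ n) (A : Finset (Fin n × Fin n))
    (hirr : ∀ v : Fin n, (v, v) ∉ A)
    (htour : ∀ u v : Fin n, u ≠ v → ((u, v) ∈ A ↔ (v, u) ∉ A))
    (hstrong : ∀ x y : Fin n, x ≠ y →
      Relation.TransGen (fun u v : Fin n => (u, v) ∈ A) x y)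
    (C : Fin n × Fin n → ℕ)
    (hc : n * (n - 1) / 2 - n + 3 ≤ colorNum A C) :
    hasRainbowTriangle A C := by
  by_contra hno
  have hC : Tournament.NoRainbowTriangle A C := by
    intro u v w huv hvw hwu
    by_contra! hne
    exact hno ⟨u, v, w, huv, hvw, hwu, hne⟩
  have hS : Tournament.IsStrongOn A Finset.univ := by
    intro x _ y _
    rcases eq_or_ne x y with rfl | hxy
    · exact .refl
    · refine Relation.ReflTransGen.mono (fun u w h => ?_) _ _ (hstrong x y hxy).to_reflTransGen
      simpa [Tournament.arcsOn] using h
  have hbound := hS.card_image_arcsOn_add_card_le ⟨hirr, htour⟩ hC (by simpa using hn)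
  have harcs : Tournament.arcsOn A Finset.univ = A := by simp [Tournament.arcsOn]
  rw [harcs, Finset.card_univ, Fintype.card_fin] at hbound
  rw [colorNum, ← Nat.choose_two_right] at hc
  omega
end

section
/- For every n ≥ 3 there exists an arc-colored strongly connected tournament on n vertices with color number exactly n(n−1)/2 − n + 2 that contains no rainbow triangle. (Explicitly: with vertices v_1, …, v_n and arc set ({v_iv_j : 1 ≤ i < j ≤ n} \ {v_1v_n}) ∪ {v_nv_1}, color all arcs incident to v_1 with one common color and all remaining arcs with pairwise distinct new colors.) -/
open Finset Relation

theorem Relation.transGen_of_succ_of_top_bot {α : Type*} [LinearOrder α] [SuccOrder α]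
    [IsSuccArchimedean α] [OrderBot α] [OrderTop α] {r : α → α → Prop}
    (hsucc : ∀ i, i ≠ ⊤ → r i (Order.succ i)) (htop : r ⊤ ⊥) (x y : α) : TransGen r x y := by
  have up : ∀ {a b : α}, a ≤ b → ReflTransGen r a b := fun hab =>
    reflTransGen_of_succ_of_le r (fun i hi => hsucc i hi.2.ne_top) hab
  exact TransGen.trans_right (up le_top) (TransGen.head' htop (up bot_le))

theorem Finset.card_image_eq_card_filter_not_add_one {α β : Type*} [DecidableEq β]
    {s : Finset α} {f : α → β} {p : α → Prop} [DecidablePred p] {c : β}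
    (hp : ∃ a ∈ s, p a) (hc : ∀ a ∈ s, p a → f a = c)
    (hinj : Set.InjOn f {a ∈ s | ¬p a}) (hne : ∀ a ∈ s, ¬p a → f a ≠ c) :
    #(s.image f) = #{a ∈ s | ¬p a} + 1 := by
  have himage : s.image f = insert c ({a ∈ s | ¬p a}.image f) := by
    ext b
    simp only [mem_image, mem_insert, mem_filter]
    constructor
    · rintro ⟨a, ha, rfl⟩
      by_cases hpa : p a
      · exact .inl (hc a ha hpa)
      · exact .inr ⟨a, ⟨ha, hpa⟩, rfl⟩
    · rintro (rfl | ⟨a, ⟨ha, -⟩, rfl⟩)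
      · obtain ⟨a, ha, hpa⟩ := hp
        exact ⟨a, ha, hc a ha hpa⟩
      · exact ⟨a, ha, rfl⟩
  have hc_notMem : c ∉ {a ∈ s | ¬p a}.image f := by
    simp only [mem_image, mem_filter, not_exists, not_and, and_imp]
    exact fun a ha hpa => hne a ha hpa
  rw [himage, card_insert_of_notMem hc_notMem, card_image_of_injOn (by simpa using hinj)]

theorem not_hasRainbowTriangle_of_star {n : ℕ} {A : Finset (Fin n × Fin n)}
    {C : Fin n × Fin n → ℕ} (z : Fin n) {c : ℕ}
    (hstar : ∀ u v, (u, v) ∈ A → (u = z ∨ v = z) → C (u, v) = c)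
    (hmono : ∀ u v, (u, v) ∈ A → u ≠ z → v ≠ z → u < v) :
    ¬hasRainbowTriangle A C := by
  rintro ⟨u, v, w, huv, hvw, hwu, h₁, h₂, h₃⟩
  by_cases hu : u = z
  · exact h₃ ((hstar w u hwu (.inr hu)).trans (hstar u v huv (.inl hu)).symm)
  by_cases hv : v = z
  · exact h₁ ((hstar u v huv (.inr hv)).trans (hstar v w hvw (.inl hv)).symm)
  by_cases hw : w = z
  · exact h₂ ((hstar v w hvw (.inr hw)).trans (hstar w u hwu (.inl hw)).symm)
  exact lt_asymm ((hmono u v huv hu hv).trans (hmono v w hvw hv hw)) (hmono w u hwu hw hu)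

def almostTransitiveArcs (k : ℕ) : Finset (Fin (k + 1) × Fin (k + 1)) :=
  {p | p.1 < p.2 ∧ p ≠ (0, Fin.last k) ∨ p = (Fin.last k, 0)}

def starColoring (k : ℕ) (p : Fin (k + 1) × Fin (k + 1)) : ℕ :=
  if p.1 = 0 ∨ p.2 = 0 then 0 else Nat.pair p.1 p.2 + 1

theorem mem_almostTransitiveArcs {k : ℕ} {u v : Fin (k + 1)} :
    (u, v) ∈ almostTransitiveArcs k ↔
      u < v ∧ ¬(u = 0 ∧ v = Fin.last k) ∨ u = Fin.last k ∧ v = 0 := by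
  simp [almostTransitiveArcs]

theorem mem_almostTransitiveArcs_val {k : ℕ} {u v : Fin (k + 1)} :
    (u, v) ∈ almostTransitiveArcs k ↔
      (u : ℕ) < v ∧ ¬((u : ℕ) = 0 ∧ (v : ℕ) = k) ∨ (u : ℕ) = k ∧ (v : ℕ) = 0 := by
  simp only [mem_almostTransitiveArcs, Fin.lt_def, Fin.ext_iff, Fin.val_last, Fin.val_zero]

theorem self_notMem_almostTransitiveArcs {k : ℕ} (hk : 1 ≤ k) (v : Fin (k + 1)) :
    (v, v) ∉ almostTransitiveArcs k := by
  rw [mem_almostTransitiveArcs_val]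
  omega

theorem mem_almostTransitiveArcs_iff_swap_notMem {k : ℕ} (hk : 1 ≤ k) {u v : Fin (k + 1)}
    (huv : u ≠ v) : (u, v) ∈ almostTransitiveArcs k ↔ (v, u) ∉ almostTransitiveArcs k := by
  rw [mem_almostTransitiveArcs_val, mem_almostTransitiveArcs_val]
  have := Fin.val_ne_of_ne huv
  omega

theorem transGen_almostTransitiveArcs {k : ℕ} (hk : 2 ≤ k) (x y : Fin (k + 1)) :
    TransGen (fun u v => (u, v) ∈ almostTransitiveArcs k) x y := by
  refine transGen_of_succ_of_top_bot (fun i hi => ?_) ?_ x y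
  · obtain ⟨i, rfl⟩ := Fin.exists_castSucc_eq.mpr hi
    rw [Fin.orderSucc_castSucc, mem_almostTransitiveArcs_val]
    simp only [Fin.val_castSucc, Fin.val_succ]
    omega
  · rw [Fin.top_eq_last, bot_eq_zero, mem_almostTransitiveArcs]
    exact .inr ⟨rfl, rfl⟩

theorem card_filter_almostTransitiveArcs (k : ℕ) :
    #{p ∈ almostTransitiveArcs k | ¬(p.1 = 0 ∨ p.2 = 0)} = k.choose 2 := by
  have hlt := Fintype.card_product_filter_lt (α := Fin k)
  rw [Fintype.card_fin] at hlt
  rw [← hlt]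
  refine Eq.symm (card_nbij (fun p => (p.1.succ, p.2.succ)) ?_ ?_ ?_)
  · rintro ⟨a, b⟩ h
    simpa [mem_almostTransitiveArcs, Fin.succ_ne_zero] using h
  · rintro ⟨a, b⟩ - ⟨c, d⟩ - h
    simpa using h
  · rintro ⟨u, v⟩ h
    simp only [coe_filter, Set.mem_ofPred_eq, mem_almostTransitiveArcs, not_or] at h
    obtain ⟨hu, hv⟩ := h.2
    obtain ⟨a, rfl⟩ := Fin.exists_succ_eq.mpr hu
    obtain ⟨b, rfl⟩ := Fin.exists_succ_eq.mpr hv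
    refine ⟨(a, b), ?_, rfl⟩
    simpa [hv] using h.1

theorem colorNum_starColoring (k : ℕ) :
    colorNum (almostTransitiveArcs k) (starColoring k) = k.choose 2 + 1 := by
  rw [colorNum, ← card_filter_almostTransitiveArcs]
  refine card_image_eq_card_filter_not_add_one (c := 0) ?_ ?_ ?_ ?_
  · exact ⟨(Fin.last k, 0), mem_almostTransitiveArcs.mpr (.inr ⟨rfl, rfl⟩), .inr rfl⟩
  · intro p _ hp
    exact if_pos hp
  · rintro ⟨a, b⟩ ⟨-, hab⟩ ⟨c, d⟩ ⟨-, hcd⟩ h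
    simp only [starColoring, if_neg hab, if_neg hcd, add_left_inj, Nat.pair_eq_pair] at h
    exact Prod.ext (Fin.ext h.1) (Fin.ext h.2)
  · intro p _ hp
    simp [starColoring, hp]

theorem not_hasRainbowTriangle_starColoring (k : ℕ) :
    ¬hasRainbowTriangle (almostTransitiveArcs k) (starColoring k) := by
  refine not_hasRainbowTriangle_of_star 0 (fun u v _ h => if_pos h) fun u v huv hu hv => ?_
  rw [mem_almostTransitiveArcs] at huv
  rcases huv with ⟨hlt, -⟩ | ⟨-, rfl⟩
  · exact hlt
  · exact absurd rfl hv

/-- For every `n ≥ 3` there is an arc-colored strongly connected tournament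
on `n` vertices with color number exactly `n(n-1)/2 - n + 2` and no rainbow triangle. -/
theorem stmt_13 (n : ℕ) (hn : 3 ≤ n) :
    ∃ (A : Finset (Fin n × Fin n)) (C : Fin n × Fin n → ℕ),
      (∀ v : Fin n, (v, v) ∉ A) ∧
      (∀ u v : Fin n, u ≠ v → ((u, v) ∈ A ↔ (v, u) ∉ A)) ∧
      (∀ x y : Fin n, x ≠ y →
        Relation.TransGen (fun u v : Fin n => (u, v) ∈ A) x y) ∧
      colorNum A C = n * (n - 1) / 2 - n + 2 ∧
      ¬ hasRainbowTriangle A C := by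
  obtain ⟨k, rfl⟩ : ∃ k, n = k + 1 := ⟨n - 1, by omega⟩
  have hk : 2 ≤ k := by omega
  refine ⟨almostTransitiveArcs k, starColoring k,
    self_notMem_almostTransitiveArcs (by omega),
    fun u v => mem_almostTransitiveArcs_iff_swap_notMem (by omega),
    fun x y _ => transGen_almostTransitiveArcs hk x y, ?_,
    not_hasRainbowTriangle_starColoring k⟩
  have htriangle : (k + 1) * (k + 1 - 1) / 2 = k + k.choose 2 := by
    rw [← Nat.choose_two_right, Nat.choose_succ_succ', Nat.choose_one_right]
  have hpos : 0 < k.choose 2 := Nat.choose_pos hk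
  rw [colorNum_starColoring, htriangle]
  omega
end

section
/- Let D be an arc-colored digraph of order n ≥ 4 that contains no rainbow triangle, and let v be a vertex of D such that the induced subdigraph D − v is a complete digraph of order n − 1. If d^s(v) ≥ 3, then CN⁻(v) ∩ C^s(v) = ∅ or CN⁺(v) ∩ C^s(v) = ∅. -/
/-- The set of colors saturated by the vertex `v`: colors `k` appearing on some arc such
that every arc colored `k` is incident to `v`. -/
def satColors {n : ℕ} (A : Finset (Fin n × Fin n)) (C : Fin n × Fin n → ℕ)
    (v : Fin n) : Finset ℕ :=
  (A.image C).filter (fun k => ∀ p ∈ A, C p = k → p.1 = v ∨ p.2 = v)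

/-- The set of colors appearing on in-arcs of `v`. -/
def inColors {n : ℕ} (A : Finset (Fin n × Fin n)) (C : Fin n × Fin n → ℕ)
    (v : Fin n) : Finset ℕ :=
  (A.filter (fun p => p.2 = v)).image C

/-- The set of colors appearing on out-arcs of `v`. -/
def outColors {n : ℕ} (A : Finset (Fin n × Fin n)) (C : Fin n × Fin n → ℕ)
    (v : Fin n) : Finset ℕ :=
  (A.filter (fun p => p.1 = v)).image C

section SaturatedColors

variable {n : ℕ} {A : Finset (Fin n × Fin n)} {C : Fin n × Fin n → ℕ} {v : Fin n}

def IsSatInNbr (A : Finset (Fin n × Fin n)) (C : Fin n × Fin n → ℕ) (v x : Fin n) : Prop :=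
  (x, v) ∈ A ∧ C (x, v) ∈ satColors A C v

def IsSatOutNbr (A : Finset (Fin n × Fin n)) (C : Fin n × Fin n → ℕ) (v y : Fin n) : Prop :=
  (v, y) ∈ A ∧ C (v, y) ∈ satColors A C v

theorem mem_satColors {k : ℕ} :
    k ∈ satColors A C v ↔ (∃ p ∈ A, C p = k) ∧ ∀ p ∈ A, C p = k → p.1 = v ∨ p.2 = v := by
  simp only [satColors, Finset.mem_filter, Finset.mem_image]

theorem color_notMem_satColors {p : Fin n × Fin n} (hp : p ∈ A) (h₁ : p.1 ≠ v) (h₂ : p.2 ≠ v) :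
    C p ∉ satColors A C v := fun hk => (mem_satColors.mp hk).2 p hp rfl |>.elim h₁ h₂

theorem exists_arc_of_mem_satColors {k : ℕ} (hk : k ∈ satColors A C v) :
    (∃ u, IsSatInNbr A C v u ∧ C (u, v) = k) ∨ (∃ w, IsSatOutNbr A C v w ∧ C (v, w) = k) := by
  obtain ⟨⟨⟨a, b⟩, hp, rfl⟩, hinc⟩ := mem_satColors.mp hk
  rcases hinc _ hp rfl with rfl | rfl
  · exact .inr ⟨b, ⟨hp, hk⟩, rfl⟩
  · exact .inl ⟨a, ⟨hp, hk⟩, rfl⟩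

theorem exists_isSatInNbr (h : ¬ Disjoint (inColors A C v) (satColors A C v)) :
    ∃ x, IsSatInNbr A C v x := by
  obtain ⟨k, hk, hks⟩ := Finset.not_disjoint_iff.mp h
  obtain ⟨⟨x, _⟩, hp, rfl⟩ := Finset.mem_image.mp hk
  obtain ⟨hpA, rfl⟩ := Finset.mem_filter.mp hp
  exact ⟨x, hpA, hks⟩

theorem exists_isSatOutNbr (h : ¬ Disjoint (outColors A C v) (satColors A C v)) :
    ∃ y, IsSatOutNbr A C v y := by
  obtain ⟨k, hk, hks⟩ := Finset.not_disjoint_iff.mp h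
  obtain ⟨⟨_, y⟩, hp, rfl⟩ := Finset.mem_image.mp hk
  obtain ⟨hpA, rfl⟩ := Finset.mem_filter.mp hp
  exact ⟨y, hpA, hks⟩

theorem color_eq_of_isSatInNbr_of_isSatOutNbr (hnr : ¬ hasRainbowTriangle A C) {x y : Fin n}
    (hxv : x ≠ v) (hyv : y ≠ v) (hyx : (y, x) ∈ A) (hx : IsSatInNbr A C v x)
    (hy : IsSatOutNbr A C v y) : C (x, v) = C (v, y) := by
  have hyx_unsat : C (y, x) ∉ satColors A C v := color_notMem_satColors hyx hyv hxv
  by_contra hne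
  refine hnr ⟨x, v, y, hx.1, hy.1, hyx, hne, fun h => hyx_unsat ?_, fun h => hyx_unsat ?_⟩
  · exact h ▸ hy.2
  · exact h.symm ▸ hx.2

variable (hA : ∀ p ∈ A, p.1 ≠ p.2) (hcomp : ∀ u w : Fin n, u ≠ v → w ≠ v → u ≠ w → (u, w) ∈ A)
  (hnr : ¬ hasRainbowTriangle A C)
include hA hcomp hnr

theorem satColors_subset_pair {x y : Fin n} (hx : IsSatInNbr A C v x) (hy : IsSatOutNbr A C v y)
    (hxy : x = y ∨ (¬ IsSatOutNbr A C v x ∧ ¬ IsSatInNbr A C v y)) :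
    satColors A C v ⊆ {C (x, v), C (v, y)} := by
  have hxv : x ≠ v := hA _ hx.1
  have hyv : y ≠ v := (hA _ hy.1).symm
  intro k hk
  rw [Finset.mem_insert, Finset.mem_singleton]
  rcases exists_arc_of_mem_satColors hk with ⟨u, hu, rfl⟩ | ⟨w, hw, rfl⟩
  · by_cases huy : u = y
    · subst huy
      rcases hxy with rfl | ⟨-, hnot⟩
      · exact .inl rfl
      · exact (hnot hu).elim
    · exact .inr (color_eq_of_isSatInNbr_of_isSatOutNbr hnr (hA _ hu.1) hyv
        (hcomp y u hyv (hA _ hu.1) (Ne.symm huy)) hu hy)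
  · by_cases hwx : w = x
    · subst hwx
      rcases hxy with rfl | ⟨hnot, -⟩
      · exact .inr rfl
      · exact (hnot hw).elim
    · exact .inl (color_eq_of_isSatInNbr_of_isSatOutNbr hnr hxv (hA _ hw.1).symm
        (hcomp w x (hA _ hw.1).symm hxv hwx) hx hw).symm

theorem card_satColors_le_two (hin : ∃ x, IsSatInNbr A C v x) (hout : ∃ y, IsSatOutNbr A C v y) :
    (satColors A C v).card ≤ 2 := by
  suffices ∃ x y, IsSatInNbr A C v x ∧ IsSatOutNbr A C v y ∧
      (x = y ∨ (¬ IsSatOutNbr A C v x ∧ ¬ IsSatInNbr A C v y)) by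
    obtain ⟨x, y, hx, hy, hxy⟩ := this
    exact (Finset.card_le_card (satColors_subset_pair hA hcomp hnr hx hy hxy)).trans
      Finset.card_le_two
  by_cases hboth : ∃ z, IsSatInNbr A C v z ∧ IsSatOutNbr A C v z
  · obtain ⟨z, hzi, hzo⟩ := hboth
    exact ⟨z, z, hzi, hzo, .inl rfl⟩
  · push Not at hboth
    obtain ⟨x, hx⟩ := hin
    obtain ⟨y, hy⟩ := hout
    exact ⟨x, y, hx, hy, .inr ⟨hboth x hx, fun hy' => hboth y hy' hy⟩⟩

end SaturatedColors

theorem stmt_14_general (n : ℕ) (A : Finset (Fin n × Fin n))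
    (hA : ∀ p ∈ A, p.1 ≠ p.2) (C : Fin n × Fin n → ℕ)
    (hnr : ¬ hasRainbowTriangle A C) (v : Fin n)
    (hcomp : ∀ u w : Fin n, u ≠ v → w ≠ v → u ≠ w → (u, w) ∈ A)
    (hs : 3 ≤ (satColors A C v).card) :
    Disjoint (inColors A C v) (satColors A C v) ∨
    Disjoint (outColors A C v) (satColors A C v) := by
  by_contra! ⟨hin, hout⟩
  have := card_satColors_le_two hA hcomp hnr (exists_isSatInNbr hin) (exists_isSatOutNbr hout)
  omega

/-- If an arc-colored digraph of order `n ≥ 4` has no rainbow triangle and a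
vertex `v` with `D - v` complete and `dˢ(v) ≥ 3`, then `CN⁻(v) ∩ Cˢ(v) = ∅` or
`CN⁺(v) ∩ Cˢ(v) = ∅`. -/
theorem stmt_14 (n : ℕ) (hn : 4 ≤ n) (A : Finset (Fin n × Fin n))
    (hA : ∀ p ∈ A, p.1 ≠ p.2) (C : Fin n × Fin n → ℕ)
    (hnr : ¬ hasRainbowTriangle A C) (v : Fin n)
    (hcomp : ∀ u w : Fin n, u ≠ v → w ≠ v → u ≠ w → (u, w) ∈ A)
    (hs : 3 ≤ (satColors A C v).card) :
    Disjoint (inColors A C v) (satColors A C v) ∨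
    Disjoint (outColors A C v) (satColors A C v) :=
  stmt_14_general n A hA C hnr v hcomp hs
end

section
/- Let D be an arc-colored complete digraph of order n ≥ 4 that contains no rainbow triangle. Then there exists a vertex v of D with d^s(v) ≤ ⌊n/2⌋. -/
/-!
Suppose every vertex saturates more than `⌊n/2⌋ ≥ 2` colors. If `v` saturates the colors of an
out-arc `vu` and of an in-arc `wv` with `u ≠ w`, the two colors agree, as otherwise `v u w` is a
rainbow triangle; with three saturated colors this forces each vertex to be out-pure (it saturates
no color of an in-arc) or in-pure. An out-pure `v` has more than `n/2` out-neighbours `u` whose arc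
color it saturates, and none of them is out-pure: the triangles `v → u → z → v` would leave `u`
saturating only `C (u, v)`. Reversing all arcs (`C ∘ Prod.swap`) exchanges out- and in-purity, so
more than `n/2` vertices are out-pure and more than `n/2` are not, which is absurd.
-/

namespace RainbowTriangleFree

open Finset

variable {n : ℕ} {C : Fin n × Fin n → ℕ} {a b u v w z : Fin n} {k : ℕ}

local notation "𝒮" => satColors (completeArcs _)

lemma mem_completeArcs {p : Fin n × Fin n} : p ∈ completeArcs n ↔ p.1 ≠ p.2 := by
  simp [completeArcs]

lemma exists_arc_of_mem_satColors (hk : k ∈ 𝒮 C v) : ∃ u ≠ v, C (v, u) = k ∨ C (u, v) = k := by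
  obtain ⟨hk, hinc⟩ := mem_filter.mp hk
  obtain ⟨⟨a, b⟩, hab, rfl⟩ := mem_image.mp hk
  rcases hinc (a, b) hab rfl with rfl | rfl
  · exact ⟨b, (mem_completeArcs.mp hab).symm, Or.inl rfl⟩
  · exact ⟨a, mem_completeArcs.mp hab, Or.inr rfl⟩

lemma apply_ne_of_mem_satColors (hk : k ∈ 𝒮 C v) (hab : a ≠ b) (ha : a ≠ v) (hb : b ≠ v) :
    C (a, b) ≠ k := fun h =>
  ((mem_filter.mp hk).2 (a, b) (mem_completeArcs.mpr hab) h).elim ha hb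

lemma satColors_comp_swap (C : Fin n × Fin n → ℕ) (v : Fin n) :
    𝒮 (C ∘ Prod.swap) v = 𝒮 C v := by
  ext k
  simp only [satColors, completeArcs, mem_filter, mem_image, mem_univ, true_and,
    Function.comp_apply, Prod.forall, Prod.exists, Prod.swap_prod_mk]
  constructor <;>
  · rintro ⟨⟨a, b, hab, h⟩, hinc⟩
    exact ⟨⟨b, a, Ne.symm hab, h⟩, fun x y hxy h => (hinc y x (Ne.symm hxy) h).symm⟩

lemma hasRainbowTriangle_of_comp_swap
    (h : hasRainbowTriangle (completeArcs n) (C ∘ Prod.swap)) :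
    hasRainbowTriangle (completeArcs n) C := by
  obtain ⟨u, v, w, huv, hvw, hwu, h₁, h₂, h₃⟩ := h
  simp only [mem_completeArcs] at huv hvw hwu
  exact ⟨u, w, v, mem_completeArcs.mpr hwu.symm, mem_completeArcs.mpr hvw.symm,
    mem_completeArcs.mpr huv.symm, h₂.symm, h₁.symm, h₃.symm⟩

/-- Otherwise `v → u → w → v` is rainbow: `C (u, w)` avoids the two colors saturated by `v`. -/
lemma apply_eq_apply_of_mem_satColors (hC : ¬ hasRainbowTriangle (completeArcs n) C)
    (hu : u ≠ v) (hw : w ≠ v) (huw : u ≠ w) (hsu : C (v, u) ∈ 𝒮 C v)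
    (hsw : C (w, v) ∈ 𝒮 C v) : C (v, u) = C (w, v) := by
  by_contra hne
  exact hC ⟨v, u, w, mem_completeArcs.mpr hu.symm, mem_completeArcs.mpr huw,
    mem_completeArcs.mpr hw, (apply_ne_of_mem_satColors hsu huw hu hw).symm,
    apply_ne_of_mem_satColors hsw huw hu hw, Ne.symm hne⟩

lemma satColors_subset_pair (hC : ¬ hasRainbowTriangle (completeArcs n) C)
    (hu : u ≠ v) (hw : w ≠ v) (hsu : C (v, u) ∈ 𝒮 C v) (hsw : C (w, v) ∈ 𝒮 C v)
    (hne : C (v, u) ≠ C (w, v)) : 𝒮 C v ⊆ {C (v, u), C (w, v)} := by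
  obtain rfl : u = w := by
    by_contra huw
    exact hne (apply_eq_apply_of_mem_satColors hC hu hw huw hsu hsw)
  intro k hk
  rw [mem_insert, mem_singleton]
  obtain ⟨t, ht, rfl | rfl⟩ := exists_arc_of_mem_satColors hk
  · by_cases htu : t = u
    · exact Or.inl (congrArg (fun x => C (v, x)) htu)
    · exact Or.inr (apply_eq_apply_of_mem_satColors hC ht hw htu hk hsw)
  · by_cases htu : t = u
    · exact Or.inr (congrArg (fun x => C (x, v)) htu)
    · exact Or.inl (apply_eq_apply_of_mem_satColors hC hu ht (Ne.symm htu) hsu hk).symm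

def IsOutPure (C : Fin n × Fin n → ℕ) (v : Fin n) : Prop :=
  ∀ w ≠ v, C (w, v) ∉ 𝒮 C v

lemma isOutPure_or_isOutPure_comp_swap (hC : ¬ hasRainbowTriangle (completeArcs n) C)
    (h3 : 2 < (𝒮 C v).card) : IsOutPure C v ∨ IsOutPure (C ∘ Prod.swap) v := by
  simp only [IsOutPure, Function.comp_apply, Prod.swap_prod_mk, satColors_comp_swap]
  by_contra! ⟨⟨w, hw, hsw⟩, ⟨u, hu, hsu⟩⟩
  obtain ⟨u, w, hu, hw, hsu, hsw, hne⟩ : ∃ u w, u ≠ v ∧ w ≠ v ∧ C (v, u) ∈ 𝒮 C v ∧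
      C (w, v) ∈ 𝒮 C v ∧ C (v, u) ≠ C (w, v) := by
    by_cases heq : C (v, u) = C (w, v)
    · obtain ⟨k, hk, hku⟩ := exists_mem_ne (s := 𝒮 C v) (by omega) (C (v, u))
      obtain ⟨t, ht, rfl | rfl⟩ := exists_arc_of_mem_satColors hk
      · exact ⟨t, w, ht, hw, hk, hsw, heq ▸ hku⟩
      · exact ⟨u, t, hu, ht, hsu, hk, Ne.symm hku⟩
    · exact ⟨u, w, hu, hw, hsu, hsw, heq⟩
  have := (card_le_card (satColors_subset_pair hC hu hw hsu hsw hne)).trans card_le_two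
  omega

def outWitnesses (C : Fin n × Fin n → ℕ) (v : Fin n) : Finset (Fin n) :=
  univ.filter fun u => u ≠ v ∧ C (v, u) ∈ 𝒮 C v

lemma card_satColors_le_card_outWitnesses (hv : IsOutPure C v) :
    (𝒮 C v).card ≤ (outWitnesses C v).card := by
  refine (card_le_card fun k hk => ?_).trans (card_image_le (f := fun u => C (v, u)))
  obtain ⟨u, hu, rfl | rfl⟩ := exists_arc_of_mem_satColors hk
  · exact mem_image.mpr ⟨u, mem_filter.mpr ⟨mem_univ _, hu, hk⟩, rfl⟩
  · exact absurd hk (hv u hu)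

/-- Otherwise `v → u → z → v` is rainbow, since `v` saturates `C (v, u)` but not `C (z, v)`. -/
lemma apply_eq_apply_of_isOutPure (hC : ¬ hasRainbowTriangle (completeArcs n) C)
    (hv : IsOutPure C v) (hu : u ≠ v) (hsu : C (v, u) ∈ 𝒮 C v) (hzu : z ≠ u) (hzv : z ≠ v) :
    C (u, z) = C (z, v) := by
  by_contra hne
  exact hC ⟨v, u, z, mem_completeArcs.mpr hu.symm, mem_completeArcs.mpr hzu.symm,
    mem_completeArcs.mpr hzv, (apply_ne_of_mem_satColors hsu hzu.symm hu hzv).symm, hne,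
    fun h => hv z hzv (h ▸ hsu)⟩

lemma satColors_subset_singleton (hC : ¬ hasRainbowTriangle (completeArcs n) C)
    (hv : IsOutPure C v) (hu : u ∈ outWitnesses C v) (hu' : IsOutPure C u) :
    𝒮 C u ⊆ {C (u, v)} := by
  obtain ⟨huv, hsu⟩ := (mem_filter.mp hu).2
  intro k hk
  obtain ⟨z, hzu, rfl | rfl⟩ := exists_arc_of_mem_satColors hk
  · by_cases hzv : z = v
    · rw [hzv, mem_singleton]
    · exact absurd (apply_eq_apply_of_isOutPure hC hv huv hsu hzu hzv).symm
        (apply_ne_of_mem_satColors hk hzv hzu huv.symm)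
  · exact absurd hk (hu' z hzu)

open Classical in
lemma lt_card_filter_not_isOutPure (hC : ¬ hasRainbowTriangle (completeArcs n) C) {m : ℕ}
    (hm : 1 ≤ m) (hbig : ∀ v, m < (𝒮 C v).card) (hv : IsOutPure C v) :
    m < (univ.filter fun u => ¬ IsOutPure C u).card := by
  refine (hbig v).trans_le ((card_satColors_le_card_outWitnesses hv).trans
    (card_le_card fun u hu => mem_filter.mpr ⟨mem_univ _, fun hu' => ?_⟩))
  have := (card_le_card (satColors_subset_singleton hC hv hu hu')).trans (card_singleton _).le
  have := hbig u
  omega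

open Classical in
lemma lt_card_filter_isOutPure (hC : ¬ hasRainbowTriangle (completeArcs n) C) {m : ℕ}
    (hm : 2 ≤ m) (hbig : ∀ v, m < (𝒮 C v).card) (hv : ¬ IsOutPure C v) :
    m < (univ.filter fun u => IsOutPure C u).card := by
  have hpure u := isOutPure_or_isOutPure_comp_swap hC (v := u) (by have := hbig u; omega)
  refine (lt_card_filter_not_isOutPure (mt hasRainbowTriangle_of_comp_swap hC) (by omega)
    (by simpa only [satColors_comp_swap] using hbig) ((hpure v).resolve_left hv)).trans_le ?_
  exact card_le_card (monotone_filter_right _ fun u _ hu => (hpure u).resolve_right hu)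

end RainbowTriangleFree

open Finset RainbowTriangleFree in
/-- Every arc-colored complete digraph of order `n ≥ 4` without rainbow
triangles has a vertex `v` with `dˢ(v) ≤ ⌊n/2⌋`. -/
theorem stmt_16 (n : ℕ) (hn : 4 ≤ n) (C : Fin n × Fin n → ℕ)
    (hnr : ¬ hasRainbowTriangle (completeArcs n) C) :
    ∃ v : Fin n, (satColors (completeArcs n) C v).card ≤ n / 2 := by
  classical
  by_contra! hbig
  set O := univ.filter fun v => IsOutPure C v
  set I := univ.filter fun v => ¬ IsOutPure C v
  have hO : ∀ v ∈ O, n / 2 < I.card := fun v hv =>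
    lt_card_filter_not_isOutPure hnr (by omega) hbig (mem_filter.mp hv).2
  have hI : ∀ v ∈ I, n / 2 < O.card := fun v hv =>
    lt_card_filter_isOutPure hnr (by omega) hbig (mem_filter.mp hv).2
  have hcard : O.card + I.card = n := by
    rw [card_filter_add_card_filter_not, card_univ, Fintype.card_fin]
  have hO_pos : 0 < O.card := by
    by_contra h
    obtain ⟨w, hw⟩ := card_pos.mp (show 0 < I.card by omega)
    have := hI w hw
    omega
  obtain ⟨v, hv⟩ := card_pos.mp hO_pos
  obtain ⟨w, hw⟩ := card_pos.mp (show 0 < I.card by have := hO v hv; omega)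
  have := hO v hv
  have := hI w hw
  omega
end

section
/- Let D be an arc-colored digraph of order 3 with a(D) + c(D) = 10 that contains no rainbow triangle. Then D is the complete digraph of order 3, i.e. the arc uv is present for every ordered pair of distinct vertices u, v. -/
open Finset

lemma completeArcs_eq_offDiag (n : ℕ) : completeArcs n = (univ : Finset (Fin n)).offDiag := by
  ext p
  simp [completeArcs]

lemma card_completeArcs (n : ℕ) : #(completeArcs n) = n * n - n := by
  rw [completeArcs_eq_offDiag, offDiag_card, card_univ, Fintype.card_fin]

section
variable {n : ℕ}

lemma subset_completeArcs {A : Finset (Fin n × Fin n)} (hA : ∀ p ∈ A, p.1 ≠ p.2) :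
    A ⊆ completeArcs n :=
  fun p hp => by simp [completeArcs, hA p hp]

lemma colorNum_le_card (A : Finset (Fin n × Fin n)) (C : Fin n × Fin n → ℕ) :
    colorNum A C ≤ #A :=
  card_image_le

lemma hasRainbowTriangle_of_injOn {A : Finset (Fin n × Fin n)} {C : Fin n × Fin n → ℕ}
    (hA : ∀ p ∈ A, p.1 ≠ p.2) (hC : Set.InjOn C A) {u v w : Fin n}
    (huv : (u, v) ∈ A) (hvw : (v, w) ∈ A) (hwu : (w, u) ∈ A) : hasRainbowTriangle A C := by
  refine ⟨u, v, w, huv, hvw, hwu, fun h => ?_, fun h => ?_, fun h => ?_⟩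
  · exact hA _ huv (congrArg Prod.fst (hC huv hvw h))
  · exact hA _ hvw (congrArg Prod.fst (hC hvw hwu h))
  · exact hA _ hwu (congrArg Prod.fst (hC hwu huv h))

end

lemma exists_triangle_erase_completeArcs_three (p : Fin 3 × Fin 3) :
    ∃ u v w : Fin 3, (u, v) ∈ (completeArcs 3).erase p ∧ (v, w) ∈ (completeArcs 3).erase p ∧
      (w, u) ∈ (completeArcs 3).erase p := by
  revert p
  decide

/-- An arc-colored digraph of order 3 with `a(D) + c(D) = 10` and no rainbow
triangle is the complete digraph of order 3. -/
theorem stmt_17 (A : Finset (Fin 3 × Fin 3)) (hA : ∀ p ∈ A, p.1 ≠ p.2)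
    (C : Fin 3 × Fin 3 → ℕ)
    (h : A.card + colorNum A C = 10)
    (hnr : ¬ hasRainbowTriangle A C) :
    ∀ u v : Fin 3, u ≠ v → (u, v) ∈ A := by
  intro u v huv
  by_contra hmiss
  have hAK : A ⊆ (completeArcs 3).erase (u, v) := fun p hp =>
    mem_erase.2 ⟨fun hpuv => hmiss (hpuv ▸ hp), subset_completeArcs hA hp⟩
  have hK : #((completeArcs 3).erase (u, v)) = 5 := by
    rw [card_erase_of_mem (by simp [completeArcs, huv]), card_completeArcs]
  have hcard_le := card_le_card hAK
  have hcolor_le := colorNum_le_card A C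
  have hAeq : A = (completeArcs 3).erase (u, v) := eq_of_subset_of_card_le hAK (by omega)
  have hC : Set.InjOn C A := injOn_of_card_image_eq (by change colorNum A C = #A; omega)
  obtain ⟨x, y, z, hxy, hyz, hzx⟩ := exists_triangle_erase_completeArcs_three (u, v)
  rw [← hAeq] at hxy hyz hzx
  exact hnr (hasRainbowTriangle_of_injOn hA hC hxy hyz hzx)
end

section
/- Let D be an arc-colored digraph on n vertices with color number c(D) ≥ ⌊n²/2⌋ + 1. Then D contains a rainbow triangle. -/
open Finset

theorem two_mul_card_le_sq_of_swap_notMem {α : Type*} [DecidableEq α] {A : Finset (α × α)}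
    {V : Finset α} (hAV : A ⊆ V ×ˢ V) (hA : ∀ p ∈ A, p.swap ∉ A) :
    2 * #A ≤ #V ^ 2 := by
  have hdisj : Disjoint A (A.image Prod.swap) := by
    rw [disjoint_left]
    intro p hp hps
    obtain ⟨q, hq, rfl⟩ := mem_image.1 hps
    exact hA q hq (by simpa using hp)
  have hsub : A ∪ A.image Prod.swap ⊆ V ×ˢ V := by
    refine union_subset hAV ?_
    intro p hp
    obtain ⟨q, hq, rfl⟩ := mem_image.1 hp
    simpa [and_comm] using hAV hq
  have := card_le_card hsub
  rw [card_union_of_disjoint hdisj, card_image_of_injective _ Prod.swap_injective,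
    card_product] at this
  linarith

theorem arc_cases_of_sdiff_pair {α : Type*} [DecidableEq α] {V : Finset α} {u v a b : α}
    (ha : a ∈ V) (hb : b ∈ V) (hab : a ≠ b) :
    (a, b) ∈ (V \ {u, v}) ×ˢ (V \ {u, v}) ∨ (a, b) = (u, v) ∨ (a, b) = (v, u) ∨
      ∃ w ∈ V \ {u, v}, (a, b) ∈ ({(v, w), (w, u)} : Finset (α × α)) ∨
        (a, b) ∈ ({(u, w), (w, v)} : Finset (α × α)) := by
  simp only [mem_product, mem_sdiff, mem_insert, mem_singleton, Prod.mk.injEq]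
  by_cases hau : a = u <;> by_cases hav : a = v <;> by_cases hbu : b = u <;>
    by_cases hbv : b = v <;> simp_all

section Rainbow

variable {n : ℕ} {A B : Finset (Fin n × Fin n)} {C : Fin n × Fin n → ℕ}

theorem hasRainbowTriangle.mono (hAB : A ⊆ B) (h : hasRainbowTriangle A C) :
    hasRainbowTriangle B C := by
  obtain ⟨u, v, w, huv, hvw, hwu, hne⟩ := h
  exact ⟨u, v, w, hAB huv, hAB hvw, hAB hwu, hne⟩

theorem card_erase_image_inter_le_one (hno : ¬ hasRainbowTriangle A C) {u v : Fin n}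
    (huv : (u, v) ∈ A) (w : Fin n) :
    (((A ∩ {(v, w), (w, u)}).image C).erase (C (u, v))).card ≤ 1 := by
  rw [card_le_one]
  simp only [mem_erase, mem_image, mem_inter, mem_insert, mem_singleton]
  rintro _ ⟨ha, p, ⟨hpA, hp⟩, rfl⟩ _ ⟨hb, q, ⟨hqA, hq⟩, rfl⟩
  by_contra hpq
  rcases hp with rfl | rfl <;> rcases hq with rfl | rfl
  · exact hpq rfl
  · exact hno ⟨u, v, w, huv, hpA, hqA, Ne.symm ha, hpq, hb⟩
  · exact hno ⟨u, v, w, huv, hqA, hpA, Ne.symm hb, Ne.symm hpq, ha⟩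
  · exact hpq rfl

theorem colorNum_le_of_mem_of_swap_mem (hno : ¬ hasRainbowTriangle A C) {V : Finset (Fin n)}
    (hAV : A ⊆ V ×ˢ V) (hA : ∀ p ∈ A, p.1 ≠ p.2) {u v : Fin n} (huv : (u, v) ∈ A)
    (hvu : (v, u) ∈ A) :
    colorNum A C ≤
      colorNum (A ∩ (V \ {u, v}) ×ˢ (V \ {u, v})) C + 2 * #(V \ {u, v}) + 2 := by
  set V' := V \ {u, v}
  let fresh : Fin n → Fin n → Fin n → Finset ℕ := fun u v w =>
    ((A ∩ {(v, w), (w, u)}).image C).erase (C (u, v))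
  have hcover : A.image C ⊆ ((A ∩ V' ×ˢ V').image C ∪
      V'.biUnion (fun w => fresh u v w ∪ fresh v u w)) ∪ {C (u, v), C (v, u)} := by
    intro c hc
    obtain ⟨⟨a, b⟩, hp, rfl⟩ := mem_image.1 hc
    obtain ⟨ha, hb⟩ : a ∈ V ∧ b ∈ V := mem_product.1 (hAV hp)
    by_cases hcol : C (a, b) = C (u, v) ∨ C (a, b) = C (v, u)
    · rcases hcol with h | h <;> simp [h]
    push Not at hcol
    rcases arc_cases_of_sdiff_pair (u := u) (v := v) ha hb (hA _ hp) with
      h | h | h | ⟨w, hw, h | h⟩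
    · exact mem_union_left _ (mem_union_left _ (mem_image_of_mem _ (mem_inter.2 ⟨hp, h⟩)))
    · exact absurd (congrArg C h) hcol.1
    · exact absurd (congrArg C h) hcol.2
    · exact mem_union_left _ (mem_union_right _ (mem_biUnion.2 ⟨w, hw, mem_union_left _
        (mem_erase.2 ⟨hcol.1, mem_image_of_mem _ (mem_inter.2 ⟨hp, h⟩)⟩)⟩))
    · exact mem_union_left _ (mem_union_right _ (mem_biUnion.2 ⟨w, hw, mem_union_right _
        (mem_erase.2 ⟨hcol.2, mem_image_of_mem _ (mem_inter.2 ⟨hp, h⟩)⟩)⟩))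
  have hfresh : #(V'.biUnion (fun w => fresh u v w ∪ fresh v u w)) ≤ 2 * #V' :=
    calc _ ≤ ∑ w ∈ V', #(fresh u v w ∪ fresh v u w) := card_biUnion_le
      _ ≤ ∑ w ∈ V', (1 + 1) := by
        gcongr with w
        exact (card_union_le _ _).trans (add_le_add
          (card_erase_image_inter_le_one hno huv w) (card_erase_image_inter_le_one hno hvu w))
      _ = 2 * #V' := by rw [sum_const, smul_eq_mul, mul_comm]
  calc colorNum A C ≤ #((A ∩ V' ×ˢ V').image C) +
        #(V'.biUnion (fun w => fresh u v w ∪ fresh v u w)) + #({C (u, v), C (v, u)} : Finset ℕ) :=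
        (card_le_card hcover).trans <| (card_union_le _ _).trans <|
          add_le_add (card_union_le _ _) le_rfl
    _ ≤ colorNum (A ∩ V' ×ˢ V') C + 2 * #V' + 2 :=
        add_le_add (add_le_add le_rfl hfresh) card_le_two

theorem colorNum_le_of_not_hasRainbowTriangle (hno : ¬ hasRainbowTriangle A C)
    (hA : ∀ p ∈ A, p.1 ≠ p.2) {V : Finset (Fin n)} (hAV : A ⊆ V ×ˢ V) :
    colorNum A C ≤ #V ^ 2 / 2 := by
  induction V using Finset.strongInduction generalizing A with
  | H V ih =>
  by_cases h2 : ∃ u v, (u, v) ∈ A ∧ (v, u) ∈ A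
  · obtain ⟨u, v, huv, hvu⟩ := h2
    set V' := V \ {u, v}
    have hpair : {u, v} ⊆ V := by
      obtain ⟨hu, hv⟩ := mem_product.1 (hAV huv)
      simp [insert_subset_iff, hu, hv]
    have hcard : #V = #V' + 2 := by
      rw [← card_sdiff_add_card_eq_card hpair, card_pair (hA _ huv)]
    have hrec : colorNum (A ∩ V' ×ˢ V') C ≤ #V' ^ 2 / 2 :=
      ih V' (sdiff_ssubset hpair (by simp)) (fun h => hno (h.mono inter_subset_left))
        (fun p hp => hA p (mem_of_mem_inter_left hp)) inter_subset_right
    have hstep : colorNum A C ≤ colorNum (A ∩ V' ×ˢ V') C + 2 * #V' + 2 :=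
      colorNum_le_of_mem_of_swap_mem hno hAV hA huv hvu
    have hsq : (#V' + 2) ^ 2 / 2 = #V' ^ 2 / 2 + (2 * #V' + 2) := by
      rw [show (#V' + 2) ^ 2 = #V' ^ 2 + (2 * #V' + 2) * 2 by ring,
        Nat.add_mul_div_right _ _ two_pos]
    rw [hcard, hsq]
    omega
  · push Not at h2
    have hasymm := two_mul_card_le_sq_of_swap_notMem hAV (fun p hp => h2 p.1 p.2 hp)
    have : colorNum A C ≤ #A := card_image_le
    omega

end Rainbow

/-- An arc-colored digraph on `n` vertices with color number at least
`⌊n²/2⌋ + 1` contains a rainbow triangle. -/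
theorem stmt_19 (n : ℕ) (A : Finset (Fin n × Fin n))
    (hA : ∀ p ∈ A, p.1 ≠ p.2) (C : Fin n × Fin n → ℕ)
    (hc : n ^ 2 / 2 + 1 ≤ colorNum A C) :
    hasRainbowTriangle A C := by
  by_contra hno
  have := colorNum_le_of_not_hasRainbowTriangle hno hA (subset_univ A : A ⊆ univ ×ˢ univ)
  rw [card_univ, Fintype.card_fin] at this
  omega
end
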